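/- Let g ∈ SL(2,ℝ). Then there exists δ > 0 with |Q₀(gm)| ≥ δ for all m ∈ ℤ² \ {0} if and only if there exists ε > 0 with ‖b_t g m‖ ≥ ε for all t ∈ ℝ and all m ∈ ℤ² \ {0}. -/

import Mathlib

/-!
Write `(x, y) = g m`. Since `b_t` multiplies `x` by `e^t` and `y` by `e^{-t}`, the product
`x y` is invariant along the orbit, and by AM–GM `‖b_t (x, y)‖² ≥ 2 |x y|`, with equality
approached by balancing `e^t |x|` against `e^{-t} |y|`. Hence `inf_t ‖b_t g m‖ = √(2 |Q₀(g m)|)`,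
so a gap `δ` for `Q₀` and a uniform lower bound `ε` for the orbit correspond via `ε² = 2 δ`.
-/

/-- The diagonal matrix `b_t = diag(e^t, e^{−t})`. -/
noncomputable def bmat (t : ℝ) : Matrix (Fin 2) (Fin 2) ℝ :=
  !![Real.exp t, 0; 0, Real.exp (-t)]

/-- The Euclidean norm on `ℝ²`. -/
noncomputable def euclNorm2 (y : Fin 2 → ℝ) : ℝ :=
  Real.sqrt (y 0 ^ 2 + y 1 ^ 2)

open Real Set Filter Topology Matrix

lemma euclNorm2_bmat_mulVec (t : ℝ) (y : Fin 2 → ℝ) :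
    euclNorm2 (bmat t *ᵥ y) = √((exp t * y 0) ^ 2 + (exp (-t) * y 1) ^ 2) := by
  simp [euclNorm2, bmat, Matrix.mulVec, dotProduct]

lemma two_mul_abs_mul_le_exp_mul_sq_add (a b t : ℝ) :
    2 * |a * b| ≤ (exp t * a) ^ 2 + (exp (-t) * b) ^ 2 := by
  have hab : |a * b| = |exp t * a| * |exp (-t) * b| := by
    rw [← abs_mul, mul_mul_mul_comm, ← exp_add, add_neg_cancel, exp_zero, one_mul]
  rw [hab, ← mul_assoc, ← sq_abs (exp t * a), ← sq_abs (exp (-t) * b)]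
  exact two_mul_le_add_sq _ _

lemma exists_exp_mul_sq_add_le (a b : ℝ) {r : ℝ} (hr : 0 < r) :
    ∃ t, (exp t * a) ^ 2 + (exp (-t) * b) ^ 2 ≤ 2 * |a * b| + r * (|a| + |b|) := by
  have ha : 0 < |a| + r := by positivity
  have hb : 0 < |b| + r := by positivity
  -- `e^{2t} = |b| / |a|` would balance the two terms exactly; the shift by `r` keeps this
  -- meaningful when a coordinate vanishes.
  set s := (|b| + r) / (|a| + r)
  have hs : 0 < s := by positivity
  refine ⟨log s / 2, ?_⟩
  have hexp : exp (log s / 2) ^ 2 = s := by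
    rw [← exp_nat_mul, Nat.cast_ofNat, mul_div_cancel₀ _ two_ne_zero, exp_log hs]
  have hexp_neg : exp (-(log s / 2)) ^ 2 = s⁻¹ := by
    rw [exp_neg, inv_pow, hexp]
  have hsa : s * a ^ 2 ≤ (|b| + r) * |a| := by
    rw [div_mul_eq_mul_div, div_le_iff₀ ha, ← sq_abs a]
    nlinarith [mul_nonneg (mul_nonneg hb.le (abs_nonneg a)) hr.le]
  have hsb : s⁻¹ * b ^ 2 ≤ (|a| + r) * |b| := by
    rw [inv_div, div_mul_eq_mul_div, div_le_iff₀ hb, ← sq_abs b]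
    nlinarith [mul_nonneg (mul_nonneg ha.le (abs_nonneg b)) hr.le]
  rw [mul_pow, mul_pow, hexp, hexp_neg, abs_mul]
  linarith

lemma isGLB_range_euclNorm2_bmat_mulVec (y : Fin 2 → ℝ) :
    IsGLB (range fun t => euclNorm2 (bmat t *ᵥ y)) √(2 * |y 0 * y 1|) := by
  constructor
  · rintro _ ⟨t, rfl⟩
    dsimp only
    rw [euclNorm2_bmat_mulVec]
    exact sqrt_le_sqrt (two_mul_abs_mul_le_exp_mul_sq_add _ _ t)
  · intro ε hε
    have hbound : ∀ r > 0, ε ≤ √(2 * |y 0 * y 1| + r * (|y 0| + |y 1|)) := by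
      intro r hr
      obtain ⟨t, ht⟩ := exists_exp_mul_sq_add_le (y 0) (y 1) hr
      calc ε ≤ euclNorm2 (bmat t *ᵥ y) := hε ⟨t, rfl⟩
        _ ≤ _ := by rw [euclNorm2_bmat_mulVec]; exact sqrt_le_sqrt ht
    have hlim : Tendsto (fun r => √(2 * |y 0 * y 1| + r * (|y 0| + |y 1|))) (𝓝[>] 0)
        (𝓝 √(2 * |y 0 * y 1|)) := by
      have hcont : Continuous fun r => √(2 * |y 0 * y 1| + r * (|y 0| + |y 1|)) := by fun_prop
      exact (hcont.tendsto' 0 _ (by simp)).mono_left nhdsWithin_le_nhds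
    exact ge_of_tendsto hlim (eventually_nhdsWithin_of_forall hbound)

theorem stmt14_general (g : Matrix (Fin 2) (Fin 2) ℝ) :
    (∃ δ : ℝ, 0 < δ ∧ ∀ m : Fin 2 → ℤ, m ≠ 0 →
        δ ≤ |(g.mulVec fun i => (m i : ℝ)) 0 * (g.mulVec fun i => (m i : ℝ)) 1|) ↔
    (∃ ε : ℝ, 0 < ε ∧ ∀ (t : ℝ) (m : Fin 2 → ℤ), m ≠ 0 →
        ε ≤ euclNorm2 ((bmat t * g).mulVec fun i => (m i : ℝ))) := by
  simp only [← Matrix.mulVec_mulVec]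
  constructor
  · rintro ⟨δ, hδ, h⟩
    refine ⟨√(2 * δ), by positivity, fun t m hm => ?_⟩
    calc √(2 * δ) ≤ √(2 * |(g *ᵥ fun i => (m i : ℝ)) 0 * (g *ᵥ fun i => (m i : ℝ)) 1|) := by
          gcongr; exact h m hm
      _ ≤ _ := (isGLB_range_euclNorm2_bmat_mulVec _).1 ⟨t, rfl⟩
  · rintro ⟨ε, hε, h⟩
    refine ⟨ε ^ 2 / 2, by positivity, fun m hm => ?_⟩
    have hε_le := (isGLB_range_euclNorm2_bmat_mulVec (g *ᵥ fun i => (m i : ℝ))).2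
      (by rintro _ ⟨t, rfl⟩; exact h t m hm)
    rw [le_sqrt hε.le (by positivity)] at hε_le
    linarith

/-- Mahler duality for binary forms: the values `Q₀(gℤ²)` have a gap at zero iff the
diagonal orbit of the lattice `gℤ²` is bounded away from `0` (i.e. bounded in the space
of unimodular lattices). -/
theorem stmt14 (g : Matrix (Fin 2) (Fin 2) ℝ) (hg : g.det = 1) :
    (∃ δ : ℝ, 0 < δ ∧ ∀ m : Fin 2 → ℤ, m ≠ 0 →
        δ ≤ |(g.mulVec fun i => (m i : ℝ)) 0 * (g.mulVec fun i => (m i : ℝ)) 1|) ↔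
    (∃ ε : ℝ, 0 < ε ∧ ∀ (t : ℝ) (m : Fin 2 → ℤ), m ≠ 0 →
        ε ≤ euclNorm2 ((bmat t * g).mulVec fun i => (m i : ℝ))) :=
  stmt14_general g
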